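/- Let V be a finite collection of vectors in ℝ^d and ⫫ the partial orthogonality independence model. Then ⫫ satisfies the contraction axiom: if A ⫫ B | C and A ⫫ D | (B ∪ C), then A ⫫ (B ∪ D) | C, for disjoint subsets A, B, C, D of V. -/

import Mathlib

noncomputable def resid {E : Type*} [NormedAddCommGroup E] [InnerProductSpace ℝ E]
    [FiniteDimensional ℝ E] (C : Set E) (v : E) : E :=
  v - (Submodule.orthogonalProjectionOnto (Submodule.span ℝ C) v : E)

/-- Partial orthogonality: `A ⫫ B | C` iff for all `a ∈ A`, `b ∈ B`, the residuals of
`a` and `b` after orthogonal projection onto the span of `C` are orthogonal. -/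
def pOrth {d : ℕ} (A B C : Finset (EuclideanSpace ℝ (Fin d))) : Prop :=
  ∀ a ∈ A, ∀ b ∈ B,
    inner ℝ (resid (C : Set (EuclideanSpace ℝ (Fin d))) a)
      (resid (C : Set (EuclideanSpace ℝ (Fin d))) b) = (0 : ℝ)

/-!
Let `r` be the residual of `a` modulo `span C`. The hypothesis `A ⫫ B | C` says that `r` is
orthogonal to the residuals of `B`, hence (as `r ⊥ span C`) to `B` itself, so `r ⊥ span (B ∪ C)`.
Therefore `r` is also the residual of `a` modulo `span (B ∪ C)`, and for `x ∈ D` both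
`⟪r, resid C x⟫` and `⟪r, resid (B ∪ C) x⟫` equal `⟪r, x⟫`, which vanishes by `A ⫫ D | B ∪ C`.
-/

open Submodule

section Residual

variable {E : Type*} [NormedAddCommGroup E] [InnerProductSpace ℝ E]

lemma mem_orthogonal_span_of_forall_inner_eq_zero {s : Set E} {u : E}
    (h : ∀ x ∈ s, inner ℝ u x = 0) : u ∈ (span ℝ s)ᗮ :=
  isOrtho_span.2 (fun _ hu x hx ↦ (Set.mem_singleton_iff.1 hu) ▸ h x hx)
    (mem_span_singleton_self u)

variable [FiniteDimensional ℝ E]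

lemma resid_eq_sub_starProjection (C : Set E) (v : E) :
    resid C v = v - (span ℝ C).starProjection v :=
  rfl

lemma resid_mem_orthogonal (C : Set E) (v : E) : resid C v ∈ (span ℝ C)ᗮ :=
  sub_starProjection_mem_orthogonal v

lemma inner_resid_right_of_mem_orthogonal {C : Set E} {u : E} (hu : u ∈ (span ℝ C)ᗮ) (v : E) :
    inner ℝ u (resid C v) = inner ℝ u v := by
  rw [resid_eq_sub_starProjection, inner_sub_right,
    inner_left_of_mem_orthogonal (starProjection_apply_mem _ v) hu, sub_zero]

lemma resid_eq_of_mem_orthogonal {C C' : Set E} (hCC' : C ⊆ C') {a : E}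
    (ha : resid C a ∈ (span ℝ C')ᗮ) : resid C' a = resid C a := by
  have hproj : (span ℝ C').starProjection a = (span ℝ C).starProjection a :=
    eq_starProjection_of_mem_orthogonal (span_mono hCC' (starProjection_apply_mem _ a)) ha
  rw [resid_eq_sub_starProjection, resid_eq_sub_starProjection, hproj]

lemma resid_mem_orthogonal_span_union {B C : Set E} {a : E}
    (hB : ∀ b ∈ B, inner ℝ (resid C a) (resid C b) = 0) :
    resid C a ∈ (span ℝ (B ∪ C))ᗮ := by
  have hr := resid_mem_orthogonal C a
  refine mem_orthogonal_span_of_forall_inner_eq_zero fun x hx ↦ ?_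
  rcases hx with hxB | hxC
  · rw [← inner_resid_right_of_mem_orthogonal hr]
    exact hB x hxB
  · exact inner_left_of_mem_orthogonal (subset_span hxC) hr

lemma inner_resid_eq_zero_of_inner_resid_union_eq_zero {B C : Set E} {a x : E}
    (hB : ∀ b ∈ B, inner ℝ (resid C a) (resid C b) = 0)
    (hx : inner ℝ (resid (B ∪ C) a) (resid (B ∪ C) x) = 0) :
    inner ℝ (resid C a) (resid C x) = 0 := by
  have hr := resid_mem_orthogonal_span_union hB
  rw [resid_eq_of_mem_orthogonal Set.subset_union_right hr,
    inner_resid_right_of_mem_orthogonal hr] at hx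
  rwa [inner_resid_right_of_mem_orthogonal (resid_mem_orthogonal C a)]

end Residual

theorem partial_orthogonality_contraction_general {d : ℕ}
    [DecidableEq (EuclideanSpace ℝ (Fin d))]
    (A B C D : Finset (EuclideanSpace ℝ (Fin d)))
    (h1 : pOrth A B C) (h2 : pOrth A D (B ∪ C)) : pOrth A (B ∪ D) C := by
  intro a ha x hx
  rcases Finset.mem_union.1 hx with hxB | hxD
  · exact h1 a ha x hxB
  · refine inner_resid_eq_zero_of_inner_resid_union_eq_zero (B := (B : Set _)) (h1 a ha) ?_
    simpa only [Finset.coe_union] using h2 a ha x hxD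

/-- Partial orthogonality satisfies the contraction axiom. -/
theorem partial_orthogonality_contraction {d : ℕ}
    [DecidableEq (EuclideanSpace ℝ (Fin d))]
    (V A B C D : Finset (EuclideanSpace ℝ (Fin d)))
    (hA : A ⊆ V) (hB : B ⊆ V) (hC : C ⊆ V) (hD : D ⊆ V)
    (hAB : Disjoint A B) (hAC : Disjoint A C) (hAD : Disjoint A D)
    (hBC : Disjoint B C) (hBD : Disjoint B D) (hCD : Disjoint C D)
    (h1 : pOrth A B C) (h2 : pOrth A D (B ∪ C)) : pOrth A (B ∪ D) C :=
  partial_orthogonality_contraction_general A B C D h1 h2
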